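/- arXiv:1901.10662 — 8 statements merged into one kernel-verified Lean document; each statement's English description precedes it below -/
import Mathlib

section
/- The string Fourier transform of the identity operator is positive semidefinite: ⟨w, 𝔉ₛ(I) w⟩_{𝓗₊₋} ≥ 0 for every w ∈ 𝓗₊₋, i.e. 𝔉ₛ(I) ≥ 0. -/
open scoped ComplexInnerProductSpace ComplexOrder
open ComplexConjugate

/-- **SFT of the identity is positive semidefinite.**
`Hp` is a finite-dimensional complex Hilbert space, `Hm` its dual, `θ` the
anti-unitary Riesz map, `Hmp` and `Hpm` realizations of the Hilbert-space tensor
products `Hm ⊗ Hp` and `Hp ⊗ Hm` (via the bilinear maps `tmp`, `tpm` which are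
inner-product compatible and have total span), and `Fs` the string Fourier
transform, characterized by its matrix elements.  Then `Fs 1 ≥ 0`, i.e.
`⟪w, Fs 1 w⟫ ≥ 0` for every `w`. -/
theorem sft_of_identity_isPositive
    {Hp Hm Hmp Hpm : Type}
    [NormedAddCommGroup Hp] [InnerProductSpace ℂ Hp] [FiniteDimensional ℂ Hp]
    [NormedAddCommGroup Hm] [InnerProductSpace ℂ Hm] [FiniteDimensional ℂ Hm]
    [NormedAddCommGroup Hmp] [InnerProductSpace ℂ Hmp] [FiniteDimensional ℂ Hmp]
    [NormedAddCommGroup Hpm] [InnerProductSpace ℂ Hpm] [FiniteDimensional ℂ Hpm]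
    (θ : Hp ≃ₗ⋆[ℂ] Hm)
    (hθ : ∀ x x' : Hp, ⟪x, x'⟫ = ⟪θ x', θ x⟫)
    (tmp : Hm →ₗ[ℂ] Hp →ₗ[ℂ] Hmp) (tpm : Hp →ₗ[ℂ] Hm →ₗ[ℂ] Hpm)
    (htmp : ∀ (y : Hm) (x : Hp) (y' : Hm) (x' : Hp),
      ⟪tmp y x, tmp y' x'⟫ = ⟪y, y'⟫ * ⟪x, x'⟫)
    (htpm : ∀ (x : Hp) (y : Hm) (x' : Hp) (y' : Hm),
      ⟪tpm x y, tpm x' y'⟫ = ⟪x, x'⟫ * ⟪y, y'⟫)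
    (hmp_span : ⊤ ≤ Submodule.span ℂ (Set.range fun p : Hm × Hp => tmp p.1 p.2))
    (hpm_span : ⊤ ≤ Submodule.span ℂ (Set.range fun p : Hp × Hm => tpm p.1 p.2))
    (Fs : (Hmp →L[ℂ] Hmp) → (Hpm →L[ℂ] Hpm))
    (hFs : ∀ (T : Hmp →L[ℂ] Hmp) (x x' : Hp) (y y' : Hm),
      ⟪tpm x y, Fs T (tpm x' y')⟫ = ⟪tmp (θ x') x, T (tmp y' (θ.symm y))⟫) :
    ∀ w : Hpm, 0 ≤ ⟪w, Fs 1 w⟫ := by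
  classical
  -- basic facts about θ
  have hθ' : ∀ (x : Hp) (y : Hm), ⟪x, θ.symm y⟫ = ⟪y, θ x⟫ := by
    intro x y
    have := hθ x (θ.symm y)
    simpa using this
  have hθ2 : ∀ (x : Hp) (y : Hm), ⟪θ x, y⟫ = ⟪θ.symm y, x⟫ := by
    intro x y
    rw [← inner_conj_symm (θ x) y, ← hθ' x y, inner_conj_symm]
  -- the distinguished vector w₀
  set e : OrthonormalBasis (Fin (Module.finrank ℂ Hp)) ℂ Hp := stdOrthonormalBasis ℂ Hp with he
  set w₀ : Hpm := ∑ i, tpm (e i) (θ (e i)) with hw₀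
  have hM : ∀ (x : Hp) (y : Hm), ⟪w₀, tpm x y⟫ = ⟪θ.symm y, x⟫ := by
    intro x y
    rw [hw₀, sum_inner]
    have : ∀ i, ⟪tpm (e i) (θ (e i)), tpm x y⟫ = ⟪θ.symm y, e i⟫ * ⟪e i, x⟫ := by
      intro i
      rw [htpm, hθ2, mul_comm]
    simp_rw [this]
    exact e.sum_inner_mul_inner (θ.symm y) x
  -- matrix elements of Fs 1
  have hmat : ∀ (x x' : Hp) (y y' : Hm),
      ⟪tpm x y, Fs 1 (tpm x' y')⟫ = conj ⟪w₀, tpm x y⟫ * ⟪w₀, tpm x' y'⟫ := by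
    intro x x' y y'
    rw [hFs, ContinuousLinearMap.one_apply, htmp, hM, hM, hθ2 x' y',
      ← inner_conj_symm x (θ.symm y)]
    ring
  -- bilinear extension
  have main : ∀ w' w : Hpm, ⟪w, Fs 1 w'⟫ = conj ⟪w₀, w⟫ * ⟪w₀, w'⟫ := by
    have step1 : ∀ (x' : Hp) (y' : Hm) (w : Hpm),
        ⟪w, Fs 1 (tpm x' y')⟫ = conj ⟪w₀, w⟫ * ⟪w₀, tpm x' y'⟫ := by
      intro x' y' w
      have hw : w ∈ Submodule.span ℂ (Set.range fun p : Hp × Hm => tpm p.1 p.2) :=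
        hpm_span trivial
      induction hw using Submodule.span_induction with
      | mem v hv => obtain ⟨⟨x, y⟩, rfl⟩ := hv; exact hmat x x' y y'
      | zero => simp
      | add u v _ _ hu hv =>
          simp only [inner_add_left, inner_add_right, map_add, hu, hv]; ring
      | smul c u _ hu =>
          simp only [inner_smul_left, inner_smul_right, map_smul, map_mul, hu]; ring
    intro w' w
    have hw' : w' ∈ Submodule.span ℂ (Set.range fun p : Hp × Hm => tpm p.1 p.2) :=
      hpm_span trivial
    induction hw' using Submodule.span_induction with
    | mem v hv => obtain ⟨⟨x, y⟩, rfl⟩ := hv; exact step1 x y w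
    | zero => simp
    | add u v _ _ hu hv =>
        simp only [inner_add_right, map_add, hu, hv]; ring
    | smul c u _ hu =>
        simp only [inner_smul_right, map_smul, hu]; ring
  intro w
  rw [main w w]
  exact star_mul_self_nonneg _
end

section
/- First RP theorem: if H ∈ hom(𝓗₋₊) satisfies 𝔉ₛ(-H) ≥ 0 (i.e. 𝔉ₛ(-H) is positive semidefinite on 𝓗₊₋), then H has the reflection-positivity property: ⟨θ(x') ⊗ x', e^{-βH}(θ(x) ⊗ x)⟩_{𝓗₋₊} ≥ 0 for all x, x' ∈ 𝓗₊ and all β ≥ 0. -/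
/-!
Write `K_T(x, y; x', y') = ⟪x ⊗ y, 𝔉ₛ(T) (x' ⊗ y')⟫ = ⟪θ(x') ⊗ x, T (y' ⊗ θ⁻¹(y))⟫`. Inserting the
resolution of the identity of `𝓗₋₊` given by the product basis `θ(eₖ) ⊗ eₗ` between `T` and `S`
expresses `K_{TS}` through `K_T` and `K_S`: in a product basis of `𝓗₊₋`, the matrix of `𝔉ₛ(TS)` is a
sum of blocks of the Hadamard product of two matrices of the form `⟪uₘ, 𝔉ₛ(T) uₙ⟫`, `⟪vₘ, 𝔉ₛ(S) vₙ⟫`.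
By the Schur product theorem, `𝔉ₛ(T), 𝔉ₛ(S) ≥ 0` therefore gives `𝔉ₛ(TS) ≥ 0`, so `𝔉ₛ((-H)ⁿ) ≥ 0`
for `n ≥ 1`. The RP matrix element of `(-H)ⁿ` is a diagonal matrix element of `𝔉ₛ((-H)ⁿ)` (and is
`|⟪x, x'⟫|²` for `n = 0`), and the exponential series `∑ βⁿ/n! (-H)ⁿ` has nonnegative coefficients.
-/

open scoped ComplexInnerProductSpace ComplexOrder InnerProductSpace Matrix

namespace OrthonormalBasis

variable {𝕜 E F G : Type*} [RCLike 𝕜]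
  [NormedAddCommGroup E] [InnerProductSpace 𝕜 E]
  [NormedAddCommGroup F] [InnerProductSpace 𝕜 F]
  [NormedAddCommGroup G] [InnerProductSpace 𝕜 G]
  {ι κ : Type*} [Fintype ι] [Fintype κ]

theorem orthonormal_antiunitary (θ : E ≃ₗ⋆[𝕜] F) (hθ : ∀ x x', ⟪x, x'⟫_𝕜 = ⟪θ x', θ x⟫_𝕜)
    (e : OrthonormalBasis ι 𝕜 E) : Orthonormal 𝕜 (θ ∘ e) := by
  classical
  rw [orthonormal_iff_ite]
  intro k k'
  simp only [Function.comp_apply, ← hθ, orthonormal_iff_ite.mp e.orthonormal, eq_comm]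

theorem top_le_span_antiunitary (θ : E ≃ₗ⋆[𝕜] F) (e : OrthonormalBasis ι 𝕜 E) :
    ⊤ ≤ Submodule.span 𝕜 (Set.range (θ ∘ e)) := by
  rw [Set.range_comp, show ⇑θ = ⇑(θ : E →ₗ⋆[𝕜] F) from rfl, Submodule.span_image,
    ← e.coe_toBasis, e.toBasis.span_eq, Submodule.map_top, LinearEquiv.range]

protected noncomputable def mapAntiunitary (θ : E ≃ₗ⋆[𝕜] F)
    (hθ : ∀ x x', ⟪x, x'⟫_𝕜 = ⟪θ x', θ x⟫_𝕜) (e : OrthonormalBasis ι 𝕜 E) :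
    OrthonormalBasis ι 𝕜 F :=
  OrthonormalBasis.mk (orthonormal_antiunitary θ hθ e) (top_le_span_antiunitary θ e)

@[simp]
theorem coe_mapAntiunitary (θ : E ≃ₗ⋆[𝕜] F) (hθ : ∀ x x', ⟪x, x'⟫_𝕜 = ⟪θ x', θ x⟫_𝕜)
    (e : OrthonormalBasis ι 𝕜 E) : ⇑(e.mapAntiunitary θ hθ) = θ ∘ e :=
  OrthonormalBasis.coe_mk _ _

theorem orthonormal_bilin (t : E →ₗ[𝕜] F →ₗ[𝕜] G)
    (ht : ∀ x y x' y', ⟪t x y, t x' y'⟫_𝕜 = ⟪x, x'⟫_𝕜 * ⟪y, y'⟫_𝕜)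
    (e : OrthonormalBasis ι 𝕜 E) (f : OrthonormalBasis κ 𝕜 F) :
    Orthonormal 𝕜 fun p : ι × κ => t (e p.1) (f p.2) := by
  classical
  rw [orthonormal_iff_ite]
  rintro ⟨k, l⟩ ⟨k', l'⟩
  simp only [ht, orthonormal_iff_ite.mp e.orthonormal, orthonormal_iff_ite.mp f.orthonormal,
    Prod.mk.injEq, ite_zero_mul_ite_zero, mul_one]

theorem top_le_span_bilin (t : E →ₗ[𝕜] F →ₗ[𝕜] G)
    (hspan : ⊤ ≤ Submodule.span 𝕜 (Set.range fun p : E × F => t p.1 p.2))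
    (e : OrthonormalBasis ι 𝕜 E) (f : OrthonormalBasis κ 𝕜 F) :
    ⊤ ≤ Submodule.span 𝕜 (Set.range fun p : ι × κ => t (e p.1) (f p.2)) := by
  refine hspan.trans (Submodule.span_le.mpr ?_)
  rintro _ ⟨⟨x, y⟩, rfl⟩
  rw [← e.sum_repr' x, ← f.sum_repr' y]
  simp only [map_sum, map_smul, LinearMap.sum_apply, LinearMap.smul_apply]
  exact Submodule.sum_mem _ fun l _ => Submodule.smul_mem _ _ <|
    Submodule.sum_mem _ fun k _ => Submodule.smul_mem _ _ <| Submodule.subset_span ⟨(k, l), rfl⟩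

protected noncomputable def ofBilin (t : E →ₗ[𝕜] F →ₗ[𝕜] G)
    (ht : ∀ x y x' y', ⟪t x y, t x' y'⟫_𝕜 = ⟪x, x'⟫_𝕜 * ⟪y, y'⟫_𝕜)
    (hspan : ⊤ ≤ Submodule.span 𝕜 (Set.range fun p : E × F => t p.1 p.2))
    (e : OrthonormalBasis ι 𝕜 E) (f : OrthonormalBasis κ 𝕜 F) :
    OrthonormalBasis (ι × κ) 𝕜 G :=
  OrthonormalBasis.mk (orthonormal_bilin t ht e f) (top_le_span_bilin t hspan e f)

@[simp]
theorem coe_ofBilin (t : E →ₗ[𝕜] F →ₗ[𝕜] G)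
    (ht : ∀ x y x' y', ⟪t x y, t x' y'⟫_𝕜 = ⟪x, x'⟫_𝕜 * ⟪y, y'⟫_𝕜)
    (hspan : ⊤ ≤ Submodule.span 𝕜 (Set.range fun p : E × F => t p.1 p.2))
    (e : OrthonormalBasis ι 𝕜 E) (f : OrthonormalBasis κ 𝕜 F) :
    ⇑(OrthonormalBasis.ofBilin t ht hspan e f) = fun p => t (e p.1) (f p.2) :=
  OrthonormalBasis.coe_mk _ _

end OrthonormalBasis

theorem Matrix.PosSemidef.sum_blockEntries {R κ ι : Type*} [Ring R] [PartialOrder R] [StarRing R]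
    [Fintype κ] [Fintype ι] {N : Matrix (κ × ι) (κ × ι) R} (hN : N.PosSemidef) :
    (Matrix.of fun q q' => ∑ l, ∑ k, N (q, l) (q', k)).PosSemidef := by
  classical
  let P : Matrix (κ × ι) κ R := Matrix.of fun m q => if q = m.1 then 1 else 0
  convert hN.conjTranspose_mul_mul_same P using 1
  ext q q'
  simp only [P, Matrix.mul_apply, Fintype.sum_prod_type, Matrix.conjTranspose_apply,
    Matrix.of_apply, apply_ite star, star_one, star_zero, ite_mul, mul_ite, one_mul, zero_mul,
    mul_one, mul_zero, Finset.sum_ite_irrel (p := q' = _), Finset.sum_ite_irrel (p := q = _),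
    Finset.sum_const_zero, Finset.sum_ite_eq, Finset.mem_univ, if_true]
  exact Finset.sum_comm

namespace ContinuousLinearMap

variable {E : Type*} [NormedAddCommGroup E] [InnerProductSpace ℂ E]

theorem isPositive_of_inner_nonneg {A : E →L[ℂ] E} (hA : ∀ x, 0 ≤ ⟪x, A x⟫) : A.IsPositive := by
  rw [isPositive_iff_complex]
  intro x
  obtain ⟨hre, him⟩ := Complex.nonneg_iff.mp (hA x)
  have hreal : ⟪A x, x⟫ = ⟪x, A x⟫ := by
    rw [← inner_conj_symm, Complex.conj_eq_iff_im.mpr him.symm]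
  rw [hreal]
  exact ⟨Complex.ext rfl (by simp [him]), hre⟩

theorem IsPositive.posSemidef_inner_map [CompleteSpace E] {A : E →L[ℂ] E} (hA : A.IsPositive)
    {ι : Type*} [Finite ι] (u : ι → E) : (Matrix.of fun m n => ⟪u m, A (u n)⟫).PosSemidef := by
  obtain ⟨B, rfl⟩ := CStarAlgebra.nonneg_iff_eq_star_mul_self.mp ((nonneg_iff_isPositive A).mpr hA)
  have hgram : (Matrix.of fun m n => ⟪u m, (star B * B) (u n)⟫) = Matrix.gram ℂ (B ∘ u) := by
    ext m n
    simp [star_eq_adjoint, adjoint_inner_right]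
  rw [hgram]
  exact Matrix.posSemidef_gram ℂ _

end ContinuousLinearMap

theorem NormedSpace.exp_smul_apply_nonneg {𝔸 : Type*} [NormedRing 𝔸] [NormedAlgebra ℂ 𝔸]
    [CompleteSpace 𝔸] (φ : 𝔸 →L[ℂ] ℂ) {a : 𝔸} (ha : ∀ n : ℕ, 0 ≤ φ (a ^ n)) {t : ℝ}
    (ht : 0 ≤ t) : 0 ≤ φ (NormedSpace.exp ((t : ℂ) • a)) := by
  refine ((NormedSpace.exp_series_hasSum_exp' (𝕂 := ℂ) ((t : ℂ) • a)).mapL φ).nonneg fun n => ?_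
  have hcoef : (0 : ℂ) ≤ (((n.factorial : ℝ)⁻¹ * t ^ n : ℝ) : ℂ) :=
    Complex.zero_le_real.mpr (by positivity)
  push_cast at hcoef
  simpa [smul_pow, smul_smul, mul_assoc] using mul_nonneg hcoef (ha n)

section StringFourier

variable {Hp Hm Hmp Hpm : Type*}
  [NormedAddCommGroup Hp] [InnerProductSpace ℂ Hp] [NormedAddCommGroup Hm] [InnerProductSpace ℂ Hm]
  [NormedAddCommGroup Hmp] [InnerProductSpace ℂ Hmp] [NormedAddCommGroup Hpm] [InnerProductSpace ℂ Hpm]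
  {θ : Hp ≃ₗ⋆[ℂ] Hm} {tmp : Hm →ₗ[ℂ] Hp →ₗ[ℂ] Hmp} {tpm : Hp →ₗ[ℂ] Hm →ₗ[ℂ] Hpm}
  {Fs : (Hmp →L[ℂ] Hmp) → (Hpm →L[ℂ] Hpm)}
  {ι : Type*} [Fintype ι] {e : ι → Hp} {b : OrthonormalBasis (ι × ι) ℂ Hmp}

theorem inner_stringFourier_mul
    (hFs : ∀ (T : Hmp →L[ℂ] Hmp) (x x' : Hp) (y y' : Hm),
      ⟪tpm x y, Fs T (tpm x' y')⟫ = ⟪tmp (θ x') x, T (tmp y' (θ.symm y))⟫)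
    (hb : ∀ k l, b (k, l) = tmp (θ (e k)) (e l)) (T S : Hmp →L[ℂ] Hmp) (x₁ x₂ : Hp) (y₁ y₂ : Hm) :
    ⟪tpm x₁ y₁, Fs (T * S) (tpm x₂ y₂)⟫ = ∑ l, ∑ k,
      ⟪tpm x₁ (θ (e l)), Fs T (tpm x₂ (θ (e k)))⟫ * ⟪tpm (e l) y₁, Fs S (tpm (e k) y₂)⟫ := by
  rw [hFs, mul_apply_eq_comp, ← b.sum_repr' (S _), map_sum, inner_sum,
    Fintype.sum_prod_type, Finset.sum_comm]
  refine Finset.sum_congr rfl fun l _ => Finset.sum_congr rfl fun k _ => ?_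
  have hT := hFs T x₁ x₂ (θ (e l)) (θ (e k))
  rw [θ.symm_apply_apply] at hT
  rw [map_smul, inner_smul_right, hb, hT, hFs S, mul_comm]

theorem isPositive_stringFourier_mul [CompleteSpace Hpm]
    (hFs : ∀ (T : Hmp →L[ℂ] Hmp) (x x' : Hp) (y y' : Hm),
      ⟪tpm x y, Fs T (tpm x' y')⟫ = ⟪tmp (θ x') x, T (tmp y' (θ.symm y))⟫)
    (hb : ∀ k l, b (k, l) = tmp (θ (e k)) (e l))
    {κ : Type*} [Fintype κ] {a₁ : κ → Hp} {a₂ : κ → Hm} {b' : OrthonormalBasis κ ℂ Hpm}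
    (hb' : ∀ q, b' q = tpm (a₁ q) (a₂ q)) {T S : Hmp →L[ℂ] Hmp}
    (hT : (Fs T).IsPositive) (hS : (Fs S).IsPositive) : (Fs (T * S)).IsPositive := by
  classical
  set u : κ × ι → Hpm := fun m => tpm (a₁ m.1) (θ (e m.2))
  set v : κ × ι → Hpm := fun m => tpm (e m.2) (a₂ m.1)
  have hmatrix : LinearMap.toMatrix b'.toBasis b'.toBasis (Fs (T * S)) =
      Matrix.of fun q q' => ∑ l, ∑ k,
        (Matrix.of (fun m n => ⟪u m, Fs T (u n)⟫) ⊙ Matrix.of fun m n => ⟪v m, Fs S (v n)⟫)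
          (q, l) (q', k) := by
    ext q q'
    simp [LinearMap.toMatrix_apply, OrthonormalBasis.repr_apply_apply, hb', u, v,
      inner_stringFourier_mul hFs hb]
  rw [← ContinuousLinearMap.isPositive_toLinearMap_iff, ← LinearMap.posSemidef_toMatrix_iff b',
    hmatrix]
  exact ((hT.posSemidef_inner_map u).hadamard (hS.posSemidef_inner_map v)).sum_blockEntries

end StringFourier

theorem first_RP_theorem_general
{Hp Hm Hmp Hpm : Type}
    [NormedAddCommGroup Hp] [InnerProductSpace ℂ Hp] [FiniteDimensional ℂ Hp]
    [NormedAddCommGroup Hm] [InnerProductSpace ℂ Hm]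
    [NormedAddCommGroup Hmp] [InnerProductSpace ℂ Hmp] [FiniteDimensional ℂ Hmp]
    [NormedAddCommGroup Hpm] [InnerProductSpace ℂ Hpm] [FiniteDimensional ℂ Hpm]
(θ : Hp ≃ₗ⋆[ℂ] Hm)
    (hθ : ∀ x x' : Hp, ⟪x, x'⟫ = ⟪θ x', θ x⟫)
(tmp : Hm →ₗ[ℂ] Hp →ₗ[ℂ] Hmp) (tpm : Hp →ₗ[ℂ] Hm →ₗ[ℂ] Hpm)
    (htmp : ∀ (y : Hm) (x : Hp) (y' : Hm) (x' : Hp),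
      ⟪tmp y x, tmp y' x'⟫ = ⟪y, y'⟫ * ⟪x, x'⟫)
    (htpm : ∀ (x : Hp) (y : Hm) (x' : Hp) (y' : Hm),
      ⟪tpm x y, tpm x' y'⟫ = ⟪x, x'⟫ * ⟪y, y'⟫)
    (hmp_span : ⊤ ≤ Submodule.span ℂ (Set.range fun p : Hm × Hp => tmp p.1 p.2))
    (hpm_span : ⊤ ≤ Submodule.span ℂ (Set.range fun p : Hp × Hm => tpm p.1 p.2))
(Fs : (Hmp →L[ℂ] Hmp) → (Hpm →L[ℂ] Hpm))
    (hFs : ∀ (T : Hmp →L[ℂ] Hmp) (x x' : Hp) (y y' : Hm),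
      ⟪tpm x y, Fs T (tpm x' y')⟫ = ⟪tmp (θ x') x, T (tmp y' (θ.symm y))⟫)
    (H : Hmp →L[ℂ] Hmp)
    (hpos : ∀ w : Hpm, 0 ≤ ⟪w, Fs (-H) w⟫) :
    ∀ (x x' : Hp) (β : ℝ), 0 ≤ β →
      0 ≤ ⟪tmp (θ x') x', NormedSpace.exp ((-β : ℂ) • H) (tmp (θ x) x)⟫ := by
  intro x x' β hβ
  let e := stdOrthonormalBasis ℂ Hp
  let eθ := e.mapAntiunitary θ hθ
  have hmul : ∀ {T S}, (Fs T).IsPositive → (Fs S).IsPositive → (Fs (T * S)).IsPositive :=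
    isPositive_stringFourier_mul hFs (e := e) (b := .ofBilin tmp htmp hmp_span eθ e)
      (fun _ _ => by simp [eθ]) (a₁ := fun q => e q.1) (a₂ := fun q => θ (e q.2))
      (b' := .ofBilin tpm htpm hpm_span e eθ) (fun _ => by simp [eθ])
  have hH : (Fs (-H)).IsPositive := ContinuousLinearMap.isPositive_of_inner_nonneg hpos
  have hpow : ∀ n, (Fs ((-H) ^ (n + 1))).IsPositive := by
    intro n
    induction n with
    | zero => simpa using hH
    | succ n ih => rw [pow_succ]; exact hmul ih hH
  rw [show (-β : ℂ) • H = (β : ℂ) • -H by rw [smul_neg, neg_smul]]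
  refine NormedSpace.exp_smul_apply_nonneg ((innerSL ℂ (tmp (θ x') x')).comp
    (ContinuousLinearMap.apply ℂ Hmp (tmp (θ x) x))) (fun n => ?_) hβ
  cases n with
  | zero => simpa [htmp, ← hθ] using star_mul_self_nonneg ⟪x', x⟫
  | succ n =>
    have hdiag := hFs ((-H) ^ (n + 1)) x' x' (θ x) (θ x)
    rw [θ.symm_apply_apply] at hdiag
    change 0 ≤ ⟪tmp (θ x') x', ((-H) ^ (n + 1)) (tmp (θ x) x)⟫
    rw [← hdiag]
    exact (hpow n).inner_nonneg_right _

/-- **First RP theorem.** If `𝔉ₛ(-H) ≥ 0` then `H` has the reflection-positivity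
property: `⟨θ(x') ⊗ x', e^{-βH} (θ(x) ⊗ x)⟩ ≥ 0` for all `x, x'` and `β ≥ 0`. -/
theorem first_RP_theorem
{Hp Hm Hmp Hpm : Type}
    [NormedAddCommGroup Hp] [InnerProductSpace ℂ Hp] [FiniteDimensional ℂ Hp]
    [NormedAddCommGroup Hm] [InnerProductSpace ℂ Hm] [FiniteDimensional ℂ Hm]
    [NormedAddCommGroup Hmp] [InnerProductSpace ℂ Hmp] [FiniteDimensional ℂ Hmp]
    [NormedAddCommGroup Hpm] [InnerProductSpace ℂ Hpm] [FiniteDimensional ℂ Hpm]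
(θ : Hp ≃ₗ⋆[ℂ] Hm)
    (hθ : ∀ x x' : Hp, ⟪x, x'⟫ = ⟪θ x', θ x⟫)
(tmp : Hm →ₗ[ℂ] Hp →ₗ[ℂ] Hmp) (tpm : Hp →ₗ[ℂ] Hm →ₗ[ℂ] Hpm)
    (htmp : ∀ (y : Hm) (x : Hp) (y' : Hm) (x' : Hp),
      ⟪tmp y x, tmp y' x'⟫ = ⟪y, y'⟫ * ⟪x, x'⟫)
    (htpm : ∀ (x : Hp) (y : Hm) (x' : Hp) (y' : Hm),
      ⟪tpm x y, tpm x' y'⟫ = ⟪x, x'⟫ * ⟪y, y'⟫)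
    (hmp_span : ⊤ ≤ Submodule.span ℂ (Set.range fun p : Hm × Hp => tmp p.1 p.2))
    (hpm_span : ⊤ ≤ Submodule.span ℂ (Set.range fun p : Hp × Hm => tpm p.1 p.2))
(Fs : (Hmp →L[ℂ] Hmp) → (Hpm →L[ℂ] Hpm))
    (hFs : ∀ (T : Hmp →L[ℂ] Hmp) (x x' : Hp) (y y' : Hm),
      ⟪tpm x y, Fs T (tpm x' y')⟫ = ⟪tmp (θ x') x, T (tmp y' (θ.symm y))⟫)
    (H : Hmp →L[ℂ] Hmp)
    (hpos : ∀ w : Hpm, 0 ≤ ⟪w, Fs (-H) w⟫) :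
    ∀ (x x' : Hp) (β : ℝ), 0 ≤ β →
      0 ≤ ⟪tmp (θ x') x', NormedSpace.exp ((-β : ℂ) • H) (tmp (θ x) x)⟫ :=
  first_RP_theorem_general θ hθ tmp tpm htmp htpm hmp_span hpm_span Fs hFs H hpos
end

section
/- For every T ∈ hom(𝓗₋₊), the string Fourier transform intertwines the reflection with the adjoint: 𝔉ₛ(θ(T)) = 𝔉ₛ(T)*, where θ(T) := θ T θ and * denotes the Hilbert-space adjoint on 𝓗₊₋. -/
/-!
Since θ is antiunitary, so is the reflection Θ on product vectors, hence everywhere: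
`⟪Θ a, Θ b⟫ = ⟪b, a⟫`. Moving Θ across the inner product turns the matrix element of
`𝔉ₛ(θ(T))` between `x ⊗ y` and `x' ⊗ y'` into the conjugate of the matrix element of `𝔉ₛ(T)`
with the two product vectors exchanged, i.e. the matrix element of `𝔉ₛ(T)*`. Product vectors
span, so these matrix elements determine the operators.
-/

open scoped InnerProductSpace ComplexInnerProductSpace

section SpanExt

variable {𝕜 E F : Type*} [RCLike 𝕜] [NormedAddCommGroup E] [InnerProductSpace 𝕜 E]
  [NormedAddCommGroup F] [InnerProductSpace 𝕜 F] {s : Set E}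

theorem ext_inner_left_of_span_eq_top (hs : Submodule.span 𝕜 s = ⊤) {x y : E}
    (h : ∀ v ∈ s, ⟪v, x⟫_𝕜 = ⟪v, y⟫_𝕜) : x = y :=
  ext_inner_left 𝕜 <|
    LinearMap.congr_fun (LinearMap.ext_on (f := (innerₛₗ 𝕜).flip x) (g := (innerₛₗ 𝕜).flip y) hs h)

theorem ContinuousLinearMap.ext_of_inner_span_eq_top {t : Set F}
    (hs : Submodule.span 𝕜 s = ⊤) (ht : Submodule.span 𝕜 t = ⊤) {A B : E →L[𝕜] F}
    (h : ∀ u ∈ t, ∀ v ∈ s, ⟪u, A v⟫_𝕜 = ⟪u, B v⟫_𝕜) : A = B :=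
  ContinuousLinearMap.ext_on (by simp [hs]) fun v hv =>
    ext_inner_left_of_span_eq_top ht fun u hu => h u hu v hv

theorem LinearMap.inner_map_map_of_span_eq_top (hs : Submodule.span 𝕜 s = ⊤) {Θ : E →ₗ⋆[𝕜] E}
    (h : ∀ a ∈ s, ∀ b ∈ s, ⟪Θ a, Θ b⟫_𝕜 = ⟪b, a⟫_𝕜) (u w : E) : ⟪Θ u, Θ w⟫_𝕜 = ⟪w, u⟫_𝕜 := by
  have hu : u ∈ Submodule.span 𝕜 s := hs ▸ Submodule.mem_top
  have hw : w ∈ Submodule.span 𝕜 s := hs ▸ Submodule.mem_top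
  induction hu, hw using Submodule.span_induction₂ with
  | mem_mem a b ha hb => exact h a ha b hb
  | zero_left => simp
  | zero_right => simp
  | add_left _ _ _ _ _ _ h₁ h₂ => simp [inner_add_left, inner_add_right, h₁, h₂]
  | add_right _ _ _ _ _ _ h₁ h₂ => simp [inner_add_left, inner_add_right, h₁, h₂]
  | smul_left _ _ _ _ _ h => simp [inner_smul_left, inner_smul_right, h]
  | smul_right _ _ _ _ _ h => simp [inner_smul_left, inner_smul_right, h]

end SpanExt

theorem sft_reflection_eq_adjoint_general
{Hp Hm Hmp Hpm : Type}
    [NormedAddCommGroup Hp] [InnerProductSpace ℂ Hp]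
    [NormedAddCommGroup Hm] [InnerProductSpace ℂ Hm]
    [NormedAddCommGroup Hmp] [InnerProductSpace ℂ Hmp]
    [NormedAddCommGroup Hpm] [InnerProductSpace ℂ Hpm] [FiniteDimensional ℂ Hpm]
(θ : Hp ≃ₗ⋆[ℂ] Hm)
    (hθ : ∀ x x' : Hp, ⟪x, x'⟫ = ⟪θ x', θ x⟫)
(tmp : Hm →ₗ[ℂ] Hp →ₗ[ℂ] Hmp) (tpm : Hp →ₗ[ℂ] Hm →ₗ[ℂ] Hpm)
    (htmp : ∀ (y : Hm) (x : Hp) (y' : Hm) (x' : Hp),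
      ⟪tmp y x, tmp y' x'⟫ = ⟪y, y'⟫ * ⟪x, x'⟫)
    (hmp_span : ⊤ ≤ Submodule.span ℂ (Set.range fun p : Hm × Hp => tmp p.1 p.2))
    (hpm_span : ⊤ ≤ Submodule.span ℂ (Set.range fun p : Hp × Hm => tpm p.1 p.2))
(Fs : (Hmp →L[ℂ] Hmp) → (Hpm →L[ℂ] Hpm))
    (hFs : ∀ (T : Hmp →L[ℂ] Hmp) (x x' : Hp) (y y' : Hm),
      ⟪tpm x y, Fs T (tpm x' y')⟫ = ⟪tmp (θ x') x, T (tmp y' (θ.symm y))⟫)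
(Θ : Hmp →ₛₗ[starRingEnd ℂ] Hmp)
    (hΘ : ∀ (y : Hm) (x : Hp), Θ (tmp y x) = tmp (θ x) (θ.symm y))
    (T Tθ : Hmp →L[ℂ] Hmp) (hTθ : ∀ v : Hmp, Tθ v = Θ (T (Θ v))) :
    Fs Tθ = ContinuousLinearMap.adjoint (Fs T) := by
  have hΘ_inner : ∀ u w, ⟪Θ u, Θ w⟫ = ⟪w, u⟫ := by
    refine LinearMap.inner_map_map_of_span_eq_top (top_le_iff.mp hmp_span) ?_
    rintro _ ⟨⟨y, x⟩, rfl⟩ _ ⟨⟨y', x'⟩, rfl⟩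
    dsimp only
    rw [hΘ, hΘ, htmp, htmp, ← hθ, hθ (θ.symm y), θ.apply_symm_apply, θ.apply_symm_apply, mul_comm]
  refine ContinuousLinearMap.ext_of_inner_span_eq_top (top_le_iff.mp hpm_span)
    (top_le_iff.mp hpm_span) ?_
  rintro _ ⟨⟨x, y⟩, rfl⟩ _ ⟨⟨x', y'⟩, rfl⟩
  dsimp only
  calc ⟪tpm x y, Fs Tθ (tpm x' y')⟫
      = ⟪tmp (θ x') x, Θ (T (Θ (tmp y' (θ.symm y))))⟫ := by rw [hFs, hTθ]
    _ = ⟪Θ (tmp (θ x) x'), Θ (T (tmp y (θ.symm y')))⟫ := by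
      rw [hΘ, hΘ, θ.apply_symm_apply, θ.symm_apply_apply]
    _ = ⟪T (tmp y (θ.symm y')), tmp (θ x) x'⟫ := hΘ_inner _ _
    _ = ⟪Fs T (tpm x y), tpm x' y'⟫ := by rw [← inner_conj_symm, ← hFs, inner_conj_symm]
    _ = ⟪tpm x y, ContinuousLinearMap.adjoint (Fs T) (tpm x' y')⟫ :=
      (ContinuousLinearMap.adjoint_inner_right _ _ _).symm

/-- The string Fourier transform intertwines the reflection with the adjoint:
`𝔉ₛ(θ(T)) = 𝔉ₛ(T)*`, where `θ(T) = θ T θ`. -/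
theorem sft_reflection_eq_adjoint
{Hp Hm Hmp Hpm : Type}
    [NormedAddCommGroup Hp] [InnerProductSpace ℂ Hp] [FiniteDimensional ℂ Hp]
    [NormedAddCommGroup Hm] [InnerProductSpace ℂ Hm] [FiniteDimensional ℂ Hm]
    [NormedAddCommGroup Hmp] [InnerProductSpace ℂ Hmp] [FiniteDimensional ℂ Hmp]
    [NormedAddCommGroup Hpm] [InnerProductSpace ℂ Hpm] [FiniteDimensional ℂ Hpm]
(θ : Hp ≃ₗ⋆[ℂ] Hm)
    (hθ : ∀ x x' : Hp, ⟪x, x'⟫ = ⟪θ x', θ x⟫)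
(tmp : Hm →ₗ[ℂ] Hp →ₗ[ℂ] Hmp) (tpm : Hp →ₗ[ℂ] Hm →ₗ[ℂ] Hpm)
    (htmp : ∀ (y : Hm) (x : Hp) (y' : Hm) (x' : Hp),
      ⟪tmp y x, tmp y' x'⟫ = ⟪y, y'⟫ * ⟪x, x'⟫)
    (htpm : ∀ (x : Hp) (y : Hm) (x' : Hp) (y' : Hm),
      ⟪tpm x y, tpm x' y'⟫ = ⟪x, x'⟫ * ⟪y, y'⟫)
    (hmp_span : ⊤ ≤ Submodule.span ℂ (Set.range fun p : Hm × Hp => tmp p.1 p.2))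
    (hpm_span : ⊤ ≤ Submodule.span ℂ (Set.range fun p : Hp × Hm => tpm p.1 p.2))
(Fs : (Hmp →L[ℂ] Hmp) → (Hpm →L[ℂ] Hpm))
    (hFs : ∀ (T : Hmp →L[ℂ] Hmp) (x x' : Hp) (y y' : Hm),
      ⟪tpm x y, Fs T (tpm x' y')⟫ = ⟪tmp (θ x') x, T (tmp y' (θ.symm y))⟫)
(Θ : Hmp →ₛₗ[starRingEnd ℂ] Hmp)
    (hΘ : ∀ (y : Hm) (x : Hp), Θ (tmp y x) = tmp (θ x) (θ.symm y))
    (T Tθ : Hmp →L[ℂ] Hmp) (hTθ : ∀ v : Hmp, Tθ v = Θ (T (Θ v))) :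
    Fs Tθ = ContinuousLinearMap.adjoint (Fs T) :=
  sft_reflection_eq_adjoint_general θ hθ tmp tpm htmp hmp_span hpm_span Fs hFs Θ hΘ T Tθ hTθ
end

section
/- A Hamiltonian H ∈ hom(𝓗₋₊) is reflection invariant if and only if its string Fourier transform is hermitian: θ(H) = H ⟺ 𝔉ₛ(H) = 𝔉ₛ(H)* on 𝓗₊₋. -/
open scoped ComplexInnerProductSpace ComplexOrder

/-- A Hamiltonian is reflection invariant iff its string Fourier transform is
hermitian: `θ(H) = H ↔ 𝔉ₛ(H) = 𝔉ₛ(H)*`. -/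
theorem reflection_invariant_iff_sft_selfAdjoint
{Hp Hm Hmp Hpm : Type}
    [NormedAddCommGroup Hp] [InnerProductSpace ℂ Hp] [FiniteDimensional ℂ Hp]
    [NormedAddCommGroup Hm] [InnerProductSpace ℂ Hm] [FiniteDimensional ℂ Hm]
    [NormedAddCommGroup Hmp] [InnerProductSpace ℂ Hmp] [FiniteDimensional ℂ Hmp]
    [NormedAddCommGroup Hpm] [InnerProductSpace ℂ Hpm] [FiniteDimensional ℂ Hpm]
(θ : Hp ≃ₗ⋆[ℂ] Hm)
    (hθ : ∀ x x' : Hp, ⟪x, x'⟫ = ⟪θ x', θ x⟫)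
(tmp : Hm →ₗ[ℂ] Hp →ₗ[ℂ] Hmp) (tpm : Hp →ₗ[ℂ] Hm →ₗ[ℂ] Hpm)
    (htmp : ∀ (y : Hm) (x : Hp) (y' : Hm) (x' : Hp),
      ⟪tmp y x, tmp y' x'⟫ = ⟪y, y'⟫ * ⟪x, x'⟫)
    (htpm : ∀ (x : Hp) (y : Hm) (x' : Hp) (y' : Hm),
      ⟪tpm x y, tpm x' y'⟫ = ⟪x, x'⟫ * ⟪y, y'⟫)
    (hmp_span : ⊤ ≤ Submodule.span ℂ (Set.range fun p : Hm × Hp => tmp p.1 p.2))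
    (hpm_span : ⊤ ≤ Submodule.span ℂ (Set.range fun p : Hp × Hm => tpm p.1 p.2))
(Fs : (Hmp →L[ℂ] Hmp) → (Hpm →L[ℂ] Hpm))
    (hFs : ∀ (T : Hmp →L[ℂ] Hmp) (x x' : Hp) (y y' : Hm),
      ⟪tpm x y, Fs T (tpm x' y')⟫ = ⟪tmp (θ x') x, T (tmp y' (θ.symm y))⟫)
(Θ : Hmp →ₛₗ[starRingEnd ℂ] Hmp)
    (hΘ : ∀ (y : Hm) (x : Hp), Θ (tmp y x) = tmp (θ x) (θ.symm y))
    (H : Hmp →L[ℂ] Hmp) :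
    (∀ v : Hmp, Θ (H (Θ v)) = H v) ↔ Fs H = ContinuousLinearMap.adjoint (Fs H) := by

  classical
  -- inner product behavior of θ.symm
  have hθs : ∀ y y' : Hm, ⟪y, y'⟫ = ⟪θ.symm y', θ.symm y⟫ := by
    intro y y'
    have h := hθ (θ.symm y') (θ.symm y)
    simpa using h.symm
  -- extensionality on Hmp via the spanning set
  have extmp : ∀ u v : Hmp,
      (∀ (y : Hm) (x : Hp), ⟪tmp y x, u⟫ = ⟪tmp y x, v⟫) → u = v := by
    intro u v h
    refine ext_inner_left ℂ fun w => ?_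
    have hw : w ∈ Submodule.span ℂ (Set.range fun p : Hm × Hp => tmp p.1 p.2) :=
      hmp_span Submodule.mem_top
    induction hw using Submodule.span_induction with
    | mem w hw => obtain ⟨⟨y, x⟩, rfl⟩ := hw; exact h y x
    | zero => simp
    | add a b _ _ ha hb => simp [inner_add_left, ha, hb]
    | smul c a _ ha => simp [inner_smul_left, ha]
  -- extensionality on Hpm via the spanning set
  have extpm : ∀ u v : Hpm,
      (∀ (x : Hp) (y : Hm), ⟪tpm x y, u⟫ = ⟪tpm x y, v⟫) → u = v := by
    intro u v h
    refine ext_inner_left ℂ fun w => ?_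
    have hw : w ∈ Submodule.span ℂ (Set.range fun p : Hp × Hm => tpm p.1 p.2) :=
      hpm_span Submodule.mem_top
    induction hw using Submodule.span_induction with
    | mem w hw => obtain ⟨⟨x, y⟩, rfl⟩ := hw; exact h x y
    | zero => simp
    | add a b _ _ ha hb => simp [inner_add_left, ha, hb]
    | smul c a _ ha => simp [inner_smul_left, ha]
  -- Θ is "anti-unitary": ⟪u, Θ w⟫ = ⟪w, Θ u⟫
  have hC0 : ∀ (y : Hm) (x : Hp) (w : Hmp),
      ⟪tmp y x, Θ w⟫ = ⟪w, Θ (tmp y x)⟫ := by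
    intro y x w
    have hw : w ∈ Submodule.span ℂ (Set.range fun p : Hm × Hp => tmp p.1 p.2) :=
      hmp_span Submodule.mem_top
    induction hw using Submodule.span_induction with
    | mem w hw =>
      obtain ⟨⟨y', x'⟩, rfl⟩ := hw
      rw [hΘ, hΘ, htmp, htmp]
      have h1 : ⟪y, θ x'⟫ = ⟪x', θ.symm y⟫ := by
        have := hθ x' (θ.symm y); simpa using this.symm
      have h2 : ⟪x, θ.symm y'⟫ = ⟪y', θ x⟫ := by
        have := hθ x (θ.symm y'); simpa using this
      rw [h1, h2]; ring
    | zero => simp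
    | add a b _ _ ha hb => simp [inner_add_left, inner_add_right, map_add, ha, hb]
    | smul c a _ ha =>
      rw [map_smulₛₗ, inner_smul_right, inner_smul_left, ha]
  have hC : ∀ u w : Hmp, ⟪u, Θ w⟫ = ⟪w, Θ u⟫ := by
    intro u w
    have hu : u ∈ Submodule.span ℂ (Set.range fun p : Hm × Hp => tmp p.1 p.2) :=
      hmp_span Submodule.mem_top
    induction hu using Submodule.span_induction with
    | mem u hu => obtain ⟨⟨y, x⟩, rfl⟩ := hu; exact hC0 y x w
    | zero => simp
    | add a b _ _ ha hb => simp [inner_add_left, inner_add_right, map_add, ha, hb]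
    | smul c a _ ha =>
      rw [inner_smul_left, map_smulₛₗ, inner_smul_right, ha]
  -- generator form of reflection invariance
  have keyA : (∀ v : Hmp, Θ (H (Θ v)) = H v) ↔
      ∀ (x x' : Hp) (y y' : Hm),
        ⟪tmp y' x', H (tmp y x)⟫ =
          (starRingEnd ℂ) ⟪tmp (θ x') (θ.symm y'), H (tmp (θ x) (θ.symm y))⟫ := by
    constructor
    · intro hA x x' y y'
      calc ⟪tmp y' x', H (tmp y x)⟫
          = ⟪tmp y' x', Θ (H (Θ (tmp y x)))⟫ := by rw [hA]
        _ = ⟪H (Θ (tmp y x)), Θ (tmp y' x')⟫ := hC _ _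
        _ = ⟪H (tmp (θ x) (θ.symm y)), tmp (θ x') (θ.symm y')⟫ := by rw [hΘ, hΘ]
        _ = (starRingEnd ℂ) ⟪tmp (θ x') (θ.symm y'), H (tmp (θ x) (θ.symm y))⟫ := by
            rw [← inner_conj_symm]
    · intro hB v
      have hv : v ∈ Submodule.span ℂ (Set.range fun p : Hm × Hp => tmp p.1 p.2) :=
        hmp_span Submodule.mem_top
      induction hv using Submodule.span_induction with
      | mem v hv =>
        obtain ⟨⟨y, x⟩, rfl⟩ := hv
        refine extmp _ _ fun y' x' => ?_
        calc ⟪tmp y' x', Θ (H (Θ (tmp y x)))⟫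
            = ⟪H (Θ (tmp y x)), Θ (tmp y' x')⟫ := hC _ _
          _ = ⟪H (tmp (θ x) (θ.symm y)), tmp (θ x') (θ.symm y')⟫ := by rw [hΘ, hΘ]
          _ = (starRingEnd ℂ) ⟪tmp (θ x') (θ.symm y'), H (tmp (θ x) (θ.symm y))⟫ := by
              rw [← inner_conj_symm]
          _ = ⟪tmp y' x', H (tmp y x)⟫ := (hB x x' y y').symm
      | zero => simp
      | add a b _ _ ha hb => simp [map_add, ha, hb]
      | smul c a _ ha =>
        rw [map_smulₛₗ, map_smul, map_smulₛₗ, ha]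
        simp
  -- generator form of hermiticity of Fs H
  have hadj : ∀ (x x' : Hp) (y y' : Hm),
      ⟪tpm x y, ContinuousLinearMap.adjoint (Fs H) (tpm x' y')⟫ =
        (starRingEnd ℂ) ⟪tmp (θ x) x', H (tmp y (θ.symm y'))⟫ := by
    intro x x' y y'
    rw [ContinuousLinearMap.adjoint_inner_right, ← inner_conj_symm, hFs]
  have keyB : Fs H = ContinuousLinearMap.adjoint (Fs H) ↔
      ∀ (x x' : Hp) (y y' : Hm),
        ⟪tmp (θ x') x, H (tmp y' (θ.symm y))⟫ =
          (starRingEnd ℂ) ⟪tmp (θ x) x', H (tmp y (θ.symm y'))⟫ := by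
    constructor
    · intro hE x x' y y'
      calc ⟪tmp (θ x') x, H (tmp y' (θ.symm y))⟫
          = ⟪tpm x y, Fs H (tpm x' y')⟫ := (hFs H x x' y y').symm
        _ = ⟪tpm x y, ContinuousLinearMap.adjoint (Fs H) (tpm x' y')⟫ := by rw [← hE]
        _ = (starRingEnd ℂ) ⟪tmp (θ x) x', H (tmp y (θ.symm y'))⟫ := hadj x x' y y'
    · intro hB
      ext u
      have hu : u ∈ Submodule.span ℂ (Set.range fun p : Hp × Hm => tpm p.1 p.2) :=
        hpm_span Submodule.mem_top
      induction hu using Submodule.span_induction with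
      | mem u hu =>
        obtain ⟨⟨x', y'⟩, rfl⟩ := hu
        refine extpm _ _ fun x y => ?_
        rw [hFs, hadj]
        exact hB x x' y y'
      | zero => simp
      | add a b _ _ ha hb => simp [map_add, ha, hb]
      | smul c a _ ha => simp [map_smul, ha]
  rw [keyA, keyB]
  constructor
  · intro hA x x' y y'
    have h := hA (θ.symm y) x (y') (θ x')
    simpa using h
  · intro hB x x' y y'
    have h := hB x' (θ.symm y') (θ x) y
    simpa using h
end

section
/- Schur product theorem for the convolution: if S, T ∈ hom(𝓗₊₋) are positive semidefinite, then their convolution product S * T is positive semidefinite. -/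
/-!
Write `S = A† A` and `T = B† B`. On elementary tensors, `(A ⊗ B)† (A ⊗ B)` and `S ⊗ T` have the
same matrix coefficients `⟪A u', A u⟫ ⟪B v', B v⟫ = ⟪u', S u⟫ ⟪v', T v⟫`, so `S ⊗ T` is positive,
and so is its conjugate `Y (S ⊗ T) Y†`.
-/

open scoped ComplexInnerProductSpace ComplexOrder

theorem ext_inner_left_of_span {𝕜 F : Type*} [RCLike 𝕜] [NormedAddCommGroup F]
    [InnerProductSpace 𝕜 F] {s : Set F} (hs : ⊤ ≤ Submodule.span 𝕜 s) {x y : F}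
    (h : ∀ v ∈ s, inner 𝕜 v x = inner 𝕜 v y) : x = y :=
  ext_inner_left 𝕜 fun v => LinearMap.congr_fun
    (LinearMap.ext_on (f := (innerₛₗ 𝕜).flip x) (g := (innerₛₗ 𝕜).flip y) (top_le_iff.mp hs) h) v

namespace ContinuousLinearMap

theorem ext_inner_of_span {𝕜 F : Type*} [RCLike 𝕜] [NormedAddCommGroup F]
    [InnerProductSpace 𝕜 F] {s : Set F} (hs : ⊤ ≤ Submodule.span 𝕜 s) {M N : F →L[𝕜] F}
    (h : ∀ a ∈ s, ∀ b ∈ s, inner 𝕜 a (M b) = inner 𝕜 a (N b)) : M = N :=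
  coe_injective <| LinearMap.ext_on (top_le_iff.mp hs) fun b hb =>
    ext_inner_left_of_span hs fun a ha => h a ha b hb

theorem isPositive_of_forall_inner_nonneg {E : Type*} [NormedAddCommGroup E]
    [InnerProductSpace ℂ E] (T : E →L[ℂ] E) (hT : ∀ x, 0 ≤ ⟪x, T x⟫) : T.IsPositive := by
  have hT' : ∀ x, 0 ≤ ⟪T x, x⟫ := fun x => by
    rw [← inner_conj_symm, (hT x).isSelfAdjoint.conj_eq]; exact hT x
  exact T.isPositive_iff.2
    ⟨(T.toLinearMap.isSymmetric_iff_inner_map_self_real).2 fun x => (hT' x).isSelfAdjoint, hT'⟩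

theorem adjoint_tensorMap_comp_self {𝕜 E F : Type*} [RCLike 𝕜] [NormedAddCommGroup E]
    [InnerProductSpace 𝕜 E] [CompleteSpace E] [NormedAddCommGroup F] [InnerProductSpace 𝕜 F]
    [CompleteSpace F] {t : E →ₗ[𝕜] E →ₗ[𝕜] F} {tmap : (E →L[𝕜] E) → (E →L[𝕜] E) → (F →L[𝕜] F)}
    (ht : ∀ u v u' v', inner 𝕜 (t u v) (t u' v') = inner 𝕜 u u' * inner 𝕜 v v')
    (hspan : ⊤ ≤ Submodule.span 𝕜 (Set.range fun p : E × E => t p.1 p.2))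
    (htmap : ∀ A B u v, tmap A B (t u v) = t (A u) (B v)) (A B : E →L[𝕜] E) :
    adjoint (tmap A B) ∘L tmap A B = tmap (adjoint A ∘L A) (adjoint B ∘L B) := by
  refine ext_inner_of_span hspan ?_
  rintro _ ⟨⟨u', v'⟩, rfl⟩ _ ⟨⟨u, v⟩, rfl⟩
  simp only [comp_apply, adjoint_inner_right, htmap, ht]

theorem isPositive_tensorMap {E F : Type*} [NormedAddCommGroup E] [InnerProductSpace ℂ E]
    [CompleteSpace E] [NormedAddCommGroup F] [InnerProductSpace ℂ F] [CompleteSpace F]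
    {t : E →ₗ[ℂ] E →ₗ[ℂ] F} {tmap : (E →L[ℂ] E) → (E →L[ℂ] E) → (F →L[ℂ] F)}
    (ht : ∀ u v u' v', ⟪t u v, t u' v'⟫ = ⟪u, u'⟫ * ⟪v, v'⟫)
    (hspan : ⊤ ≤ Submodule.span ℂ (Set.range fun p : E × E => t p.1 p.2))
    (htmap : ∀ A B u v, tmap A B (t u v) = t (A u) (B v)) {S T : E →L[ℂ] E}
    (hS : S.IsPositive) (hT : T.IsPositive) : (tmap S T).IsPositive := by
  obtain ⟨A, rfl⟩ := CStarAlgebra.nonneg_iff_eq_star_mul_self.mp ((nonneg_iff_isPositive S).2 hS)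
  obtain ⟨B, rfl⟩ := CStarAlgebra.nonneg_iff_eq_star_mul_self.mp ((nonneg_iff_isPositive T).2 hT)
  rw [star_eq_adjoint, star_eq_adjoint, mul_def, mul_def,
    ← adjoint_tensorMap_comp_self ht hspan htmap]
  exact isPositive_adjoint_comp_self _

end ContinuousLinearMap

theorem convolution_schur_product_general
{Hpm H2 : Type}
    [NormedAddCommGroup Hpm] [InnerProductSpace ℂ Hpm] [FiniteDimensional ℂ Hpm]
    [NormedAddCommGroup H2] [InnerProductSpace ℂ H2] [FiniteDimensional ℂ H2]
(t2 : Hpm →ₗ[ℂ] Hpm →ₗ[ℂ] H2)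
    (ht2 : ∀ (u v u' v' : Hpm), ⟪t2 u v, t2 u' v'⟫ = ⟪u, u'⟫ * ⟪v, v'⟫)
    (h2_span : ⊤ ≤ Submodule.span ℂ (Set.range fun p : Hpm × Hpm => t2 p.1 p.2))
    (Y : H2 →L[ℂ] Hpm)
(tmap : (Hpm →L[ℂ] Hpm) → (Hpm →L[ℂ] Hpm) → (H2 →L[ℂ] H2))
    (htmap : ∀ (A B : Hpm →L[ℂ] Hpm) (u v : Hpm), tmap A B (t2 u v) = t2 (A u) (B v))
    (S T : Hpm →L[ℂ] Hpm)
    (hS : ∀ w : Hpm, 0 ≤ ⟪w, S w⟫) (hT : ∀ w : Hpm, 0 ≤ ⟪w, T w⟫) :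
    ∀ w : Hpm, 0 ≤ ⟪w, (Y ∘L tmap S T ∘L ContinuousLinearMap.adjoint Y) w⟫ := by
  have hST : (tmap S T).IsPositive := ContinuousLinearMap.isPositive_tensorMap ht2 h2_span htmap
    (S.isPositive_of_forall_inner_nonneg hS) (T.isPositive_of_forall_inner_nonneg hT)
  exact (hST.conj_adjoint Y).inner_nonneg_right

/-- **Schur product theorem for the convolution.** If `S ≥ 0` and `T ≥ 0` on
`𝓗₊₋`, then `S * T = Y (S ⊗ T) Y* ≥ 0`. -/
theorem convolution_schur_product
{Hp Hm Hpm H2 : Type}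
    [NormedAddCommGroup Hp] [InnerProductSpace ℂ Hp] [FiniteDimensional ℂ Hp]
    [NormedAddCommGroup Hm] [InnerProductSpace ℂ Hm] [FiniteDimensional ℂ Hm]
    [NormedAddCommGroup Hpm] [InnerProductSpace ℂ Hpm] [FiniteDimensional ℂ Hpm]
    [NormedAddCommGroup H2] [InnerProductSpace ℂ H2] [FiniteDimensional ℂ H2]
(θ : Hp ≃ₗ⋆[ℂ] Hm)
    (hθ : ∀ x x' : Hp, ⟪x, x'⟫ = ⟪θ x', θ x⟫)
(tpm : Hp →ₗ[ℂ] Hm →ₗ[ℂ] Hpm)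
    (htpm : ∀ (x : Hp) (y : Hm) (x' : Hp) (y' : Hm),
      ⟪tpm x y, tpm x' y'⟫ = ⟪x, x'⟫ * ⟪y, y'⟫)
    (hpm_span : ⊤ ≤ Submodule.span ℂ (Set.range fun p : Hp × Hm => tpm p.1 p.2))
(t2 : Hpm →ₗ[ℂ] Hpm →ₗ[ℂ] H2)
    (ht2 : ∀ (u v u' v' : Hpm), ⟪t2 u v, t2 u' v'⟫ = ⟪u, u'⟫ * ⟪v, v'⟫)
    (h2_span : ⊤ ≤ Submodule.span ℂ (Set.range fun p : Hpm × Hpm => t2 p.1 p.2))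
    (Y : H2 →L[ℂ] Hpm)
    (hY : ∀ (x₁ : Hp) (y₁ : Hm) (x₂ : Hp) (y₂ : Hm),
      Y (t2 (tpm x₁ y₁) (tpm x₂ y₂)) = ⟪θ.symm y₁, x₂⟫ • tpm x₁ y₂)
(tmap : (Hpm →L[ℂ] Hpm) → (Hpm →L[ℂ] Hpm) → (H2 →L[ℂ] H2))
    (htmap : ∀ (A B : Hpm →L[ℂ] Hpm) (u v : Hpm), tmap A B (t2 u v) = t2 (A u) (B v))
    (S T : Hpm →L[ℂ] Hpm)
    (hS : ∀ w : Hpm, 0 ≤ ⟪w, S w⟫) (hT : ∀ w : Hpm, 0 ≤ ⟪w, T w⟫) :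
    ∀ w : Hpm, 0 ≤ ⟪w, (Y ∘L tmap S T ∘L ContinuousLinearMap.adjoint Y) w⟫ :=
  convolution_schur_product_general t2 ht2 h2_span Y tmap htmap S T hS hT
end

section
/- Positivity property of the SFT on reflection-symmetric tensor products: for every T₊ ∈ hom(𝓗₊), the operator 𝔉ₛ(θ(T₊) ⊗ T₊) is positive semidefinite on 𝓗₊₋, where θ(T₊) := θ T₊ θ ∈ hom(𝓗₋) and θ(T₊) ⊗ T₊ ∈ hom(𝓗₋₊). -/
open scoped ComplexInnerProductSpace ComplexOrder

/-- **A positivity property.** For `T₊ ∈ hom(𝓗₊)`, the operator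
`𝔉ₛ(θ(T₊) ⊗ T₊)` is positive semidefinite, where `θ(T₊) = θ T₊ θ ∈ hom(𝓗₋)`. -/
theorem sft_theta_tensor_nonneg
{Hp Hm Hmp Hpm : Type}
    [NormedAddCommGroup Hp] [InnerProductSpace ℂ Hp] [FiniteDimensional ℂ Hp]
    [NormedAddCommGroup Hm] [InnerProductSpace ℂ Hm] [FiniteDimensional ℂ Hm]
    [NormedAddCommGroup Hmp] [InnerProductSpace ℂ Hmp] [FiniteDimensional ℂ Hmp]
    [NormedAddCommGroup Hpm] [InnerProductSpace ℂ Hpm] [FiniteDimensional ℂ Hpm]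
(θ : Hp ≃ₗ⋆[ℂ] Hm)
    (hθ : ∀ x x' : Hp, ⟪x, x'⟫ = ⟪θ x', θ x⟫)
(tmp : Hm →ₗ[ℂ] Hp →ₗ[ℂ] Hmp) (tpm : Hp →ₗ[ℂ] Hm →ₗ[ℂ] Hpm)
    (htmp : ∀ (y : Hm) (x : Hp) (y' : Hm) (x' : Hp),
      ⟪tmp y x, tmp y' x'⟫ = ⟪y, y'⟫ * ⟪x, x'⟫)
    (htpm : ∀ (x : Hp) (y : Hm) (x' : Hp) (y' : Hm),
      ⟪tpm x y, tpm x' y'⟫ = ⟪x, x'⟫ * ⟪y, y'⟫)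
    (hmp_span : ⊤ ≤ Submodule.span ℂ (Set.range fun p : Hm × Hp => tmp p.1 p.2))
    (hpm_span : ⊤ ≤ Submodule.span ℂ (Set.range fun p : Hp × Hm => tpm p.1 p.2))
(Fs : (Hmp →L[ℂ] Hmp) → (Hpm →L[ℂ] Hpm))
    (hFs : ∀ (T : Hmp →L[ℂ] Hmp) (x x' : Hp) (y y' : Hm),
      ⟪tpm x y, Fs T (tpm x' y')⟫ = ⟪tmp (θ x') x, T (tmp y' (θ.symm y))⟫)
    (Tp : Hp →L[ℂ] Hp) (TT : Hmp →L[ℂ] Hmp)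
    (hTT : ∀ (y : Hm) (x : Hp), TT (tmp y x) = tmp (θ (Tp (θ.symm y))) (Tp x)) :
    ∀ w : Hpm, 0 ≤ ⟪w, Fs TT w⟫ := by

  intro w
  classical
  set b := stdOrthonormalBasis ℂ Hp with hb
  set A := ContinuousLinearMap.adjoint Tp with hAdef
  set ξ : Hpm := ∑ i, tpm (b i) (θ (A (b i))) with hξdef
  have hξ : ∀ (x : Hp) (y : Hm), ⟪ξ, tpm x y⟫ = ⟪Tp (θ.symm y), x⟫ := by
    intro x y
    have h2 : ∀ i, ⟪Tp (θ.symm y), b i⟫ = ⟪θ (A (b i)), y⟫ := by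
      intro i
      rw [hAdef, ← ContinuousLinearMap.adjoint_inner_right,
        hθ (θ.symm y) (ContinuousLinearMap.adjoint Tp (b i)), θ.apply_symm_apply]
    calc ⟪ξ, tpm x y⟫ = ∑ i, ⟪tpm (b i) (θ (A (b i))), tpm x y⟫ := by
          rw [hξdef, sum_inner]
      _ = ∑ i, ⟪Tp (θ.symm y), b i⟫ * ⟪b i, x⟫ := by
          refine Finset.sum_congr rfl fun i _ => ?_
          rw [htpm, h2 i, mul_comm]
      _ = ⟪Tp (θ.symm y), x⟫ := b.sum_inner_mul_inner _ _
  have base : ∀ (x : Hp) (y : Hm) (x' : Hp) (y' : Hm),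
      ⟪tpm x y, Fs TT (tpm x' y')⟫ =
        (starRingEnd ℂ) ⟪ξ, tpm x y⟫ * ⟪ξ, tpm x' y'⟫ := by
    intro x y x' y'
    rw [hFs, hTT, htmp, hξ x y, hξ x' y', ← hθ (Tp (θ.symm y')) x',
      ← inner_conj_symm (Tp (θ.symm y)) x, mul_comm, Complex.conj_conj]
  -- extend in the second argument
  have step1 : ∀ (x : Hp) (y : Hm) (v : Hpm),
      ⟪tpm x y, Fs TT v⟫ = (starRingEnd ℂ) ⟪ξ, tpm x y⟫ * ⟪ξ, v⟫ := by
    intro x y v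
    have hv : v ∈ Submodule.span ℂ (Set.range fun p : Hp × Hm => tpm p.1 p.2) :=
      hpm_span Submodule.mem_top
    induction hv using Submodule.span_induction with
    | mem u hu =>
        obtain ⟨⟨x', y'⟩, rfl⟩ := hu
        exact base x y x' y'
    | zero => simp
    | add u v _ _ hu hv => simp [inner_add_right, map_add, hu, hv, mul_add]
    | smul c u _ hu => simp [inner_smul_right, map_smul, hu]; ring
  -- extend in the first argument
  have key : ∀ u : Hpm, ⟪u, Fs TT u⟫ = (starRingEnd ℂ) ⟪ξ, u⟫ * ⟪ξ, u⟫ := by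
    have step2 : ∀ (u v : Hpm),
        ⟪u, Fs TT v⟫ = (starRingEnd ℂ) ⟪ξ, u⟫ * ⟪ξ, v⟫ := by
      intro u v
      have hu : u ∈ Submodule.span ℂ (Set.range fun p : Hp × Hm => tpm p.1 p.2) :=
        hpm_span Submodule.mem_top
      induction hu using Submodule.span_induction with
      | mem u hu =>
          obtain ⟨⟨x, y⟩, rfl⟩ := hu
          exact step1 x y v
      | zero => simp
      | add a b _ _ ha hb => simp [inner_add_left, inner_add_right, map_add, ha, hb, add_mul]
      | smul c a _ ha => simp [inner_smul_left, inner_smul_right, map_smul, ha]; ring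
    exact fun u => step2 u u
  rw [key w]
  exact star_mul_self_nonneg _
end

section
/- The string Fourier transform is invertible, with inverse 𝔉ₛ⁻¹ : hom(𝓗₊₋) → hom(𝓗₋₊) determined by ⟨y ⊗ x, 𝔉ₛ⁻¹(S)(y' ⊗ x')⟩_{𝓗₋₊} = ⟨x ⊗ θ(x'), S(θ(y) ⊗ y')⟩_{𝓗₊₋} for all x, x' ∈ 𝓗₊ and y, y' ∈ 𝓗₋; that is, this map composed with 𝔉ₛ in either order gives the identity. -/
open scoped ComplexInnerProductSpace ComplexOrder

private theorem sft_ext_op {E : Type} [NormedAddCommGroup E] [InnerProductSpace ℂ E]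
    (s : Set E) (hs : ⊤ ≤ Submodule.span ℂ s) (A B : E →L[ℂ] E)
    (h : ∀ u ∈ s, ∀ v ∈ s, ⟪u, A v⟫ = ⟪u, B v⟫) : A = B := by
  have hv : ∀ v ∈ s, A v = B v := by
    intro v hvs
    rw [← sub_eq_zero]
    have key : ∀ u : E, ⟪u, A v - B v⟫ = 0 := by
      intro u
      have hu : u ∈ Submodule.span ℂ s := hs trivial
      induction hu using Submodule.span_induction with
      | mem w hw => rw [inner_sub_right, h w hw v hvs, sub_self]
      | zero => simp
      | add a b _ _ ha hb => rw [inner_add_left, ha, hb, add_zero]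
      | smul c a _ ha => rw [inner_smul_left, ha, mul_zero]
    exact inner_self_eq_zero.mp (key (A v - B v))
  have : (A : E →ₗ[ℂ] E) = B :=
    LinearMap.ext_on (le_antisymm le_top hs) hv
  exact ContinuousLinearMap.coe_injective this

/-- The string Fourier transform is invertible, with inverse `𝔉ₛ⁻¹` determined by
`⟨y ⊗ x, 𝔉ₛ⁻¹(S)(y' ⊗ x')⟩ = ⟨x ⊗ θ(x'), S(θ(y) ⊗ y')⟩`: composed with `𝔉ₛ` in
either order it gives the identity. -/
theorem sft_inverse
{Hp Hm Hmp Hpm : Type}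
    [NormedAddCommGroup Hp] [InnerProductSpace ℂ Hp] [FiniteDimensional ℂ Hp]
    [NormedAddCommGroup Hm] [InnerProductSpace ℂ Hm] [FiniteDimensional ℂ Hm]
    [NormedAddCommGroup Hmp] [InnerProductSpace ℂ Hmp] [FiniteDimensional ℂ Hmp]
    [NormedAddCommGroup Hpm] [InnerProductSpace ℂ Hpm] [FiniteDimensional ℂ Hpm]
(θ : Hp ≃ₗ⋆[ℂ] Hm)
    (hθ : ∀ x x' : Hp, ⟪x, x'⟫ = ⟪θ x', θ x⟫)
(tmp : Hm →ₗ[ℂ] Hp →ₗ[ℂ] Hmp) (tpm : Hp →ₗ[ℂ] Hm →ₗ[ℂ] Hpm)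
    (htmp : ∀ (y : Hm) (x : Hp) (y' : Hm) (x' : Hp),
      ⟪tmp y x, tmp y' x'⟫ = ⟪y, y'⟫ * ⟪x, x'⟫)
    (htpm : ∀ (x : Hp) (y : Hm) (x' : Hp) (y' : Hm),
      ⟪tpm x y, tpm x' y'⟫ = ⟪x, x'⟫ * ⟪y, y'⟫)
    (hmp_span : ⊤ ≤ Submodule.span ℂ (Set.range fun p : Hm × Hp => tmp p.1 p.2))
    (hpm_span : ⊤ ≤ Submodule.span ℂ (Set.range fun p : Hp × Hm => tpm p.1 p.2))
(Fs : (Hmp →L[ℂ] Hmp) → (Hpm →L[ℂ] Hpm))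
    (hFs : ∀ (T : Hmp →L[ℂ] Hmp) (x x' : Hp) (y y' : Hm),
      ⟪tpm x y, Fs T (tpm x' y')⟫ = ⟪tmp (θ x') x, T (tmp y' (θ.symm y))⟫)
    (G : (Hpm →L[ℂ] Hpm) → (Hmp →L[ℂ] Hmp))
    (hG : ∀ (S : Hpm →L[ℂ] Hpm) (y y' : Hm) (x x' : Hp),
      ⟪tmp y x, G S (tmp y' x')⟫ = ⟪tpm x (θ x'), S (tpm (θ.symm y) y')⟫) :
    (∀ T : Hmp →L[ℂ] Hmp, G (Fs T) = T) ∧ (∀ S : Hpm →L[ℂ] Hpm, Fs (G S) = S) := by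
  constructor
  · intro T
    apply sft_ext_op _ hmp_span
    rintro _ ⟨⟨y, x⟩, rfl⟩ _ ⟨⟨y', x'⟩, rfl⟩
    have h1 := hG (Fs T) y y' x x'
    have h2 := hFs T x (θ.symm y) (θ x') y'
    rw [θ.apply_symm_apply, θ.symm_apply_apply] at h2
    rw [h1, h2]
  · intro S
    apply sft_ext_op _ hpm_span
    rintro _ ⟨⟨x, y⟩, rfl⟩ _ ⟨⟨x', y'⟩, rfl⟩
    have h1 := hFs (G S) x x' y y'
    have h2 := hG S (θ x') y' x (θ.symm y)
    rw [θ.apply_symm_apply, θ.symm_apply_apply] at h2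
    rw [h1, h2]
end

section
/- Intermediate step in the proof of the second RP theorem: suppose H ∈ hom(𝓗₋₊) decomposes as H = H₋ + H₀ + H₊ + λI where λ ∈ ℝ, H₊ = I₋ ⊗ H'₊ for some H'₊ ∈ hom(𝓗₊), H₋ = θ(H₊) := θ H₊ θ, and 𝔉ₛ(-H₀) ≥ 0. Then for every s > 0, the operator H - s·θ(H₊)H₊ has the reflection-positivity property: ⟨θ(x') ⊗ x', e^{-βH + sβ·θ(H₊)H₊}(θ(x) ⊗ x)⟩_{𝓗₋₊} ≥ 0 for all x, x' ∈ 𝓗₊ and all β ≥ 0. -/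
/-!
Fix an orthonormal basis `e` of `𝓗₊` and the orthonormal basis `θ e_i ⊗ e_j` of `𝓗₋₊`. In these
bases the matrix of `𝔉ₛ(T)` is a realignment of the matrix of `T`, and the RP pairing
`⟪θ x' ⊗ x', T (θ x ⊗ x)⟫` is a quadratic form of it. The operators `T` whose realigned matrix is
positive semidefinite form a closed convex cone that contains `1` and is stable under products:
the realignment of `T T'` sums blocks of a compression of the Kronecker product of the
realignments of `T` and `T'`. Hence the cone is stable under `exp`. It contains `-H₀` by
hypothesis and `θ(A) A` for `A = 1 - s H₊`, whose realignment has rank one, and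
`-βH + sβ θ(H₊) H₊ = c + β (-H₀) + (β / s) θ(A) A` with `c` real.
-/

open scoped ComplexInnerProductSpace ComplexOrder Kronecker

namespace Matrix

variable {n m : Type*} [Fintype n] [Fintype m]

theorem posSemidef_of_forall_dotProduct_mulVec_nonneg {M : Matrix n n ℂ}
    (h : ∀ z : n → ℂ, 0 ≤ star z ⬝ᵥ M *ᵥ z) : M.PosSemidef := by
  classical
  rw [← isPositive_toEuclideanLin_iff, LinearMap.isPositive_iff_complex]
  intro v
  have hv : ⟪toEuclideanLin M v, v⟫ = star v.ofLp ⬝ᵥ M *ᵥ v.ofLp := by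
    rw [EuclideanSpace.inner_eq_star_dotProduct, dotProduct_star, dotProduct_comm]
    exact (h v.ofLp).star_eq
  obtain ⟨hre, him⟩ := Complex.nonneg_iff.mp (h v.ofLp)
  rw [hv]
  exact ⟨Complex.ext (by simp) (by simp [him]), hre⟩

theorem PosSemidef.of_hasSum {α : Type*} {f : α → Matrix n n ℂ} {M : Matrix n n ℂ}
    (hf : HasSum f M) (hpos : ∀ a, (f a).PosSemidef) : M.PosSemidef := by
  refine posSemidef_of_forall_dotProduct_mulVec_nonneg fun z => ?_
  have hz : HasSum (fun a => star z ⬝ᵥ f a *ᵥ z) (star z ⬝ᵥ M *ᵥ z) := by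
    simp only [dotProduct, mulVec, Finset.mul_sum]
    exact hasSum_sum fun i _ => hasSum_sum fun j _ =>
      ((Pi.hasSum.mp (Pi.hasSum.mp hf i) j).mul_right _).mul_left _
  exact hz.nonneg fun a => (hpos a).dotProduct_mulVec_nonneg z

theorem PosSemidef.sum_blocks {L : Matrix (n × m) (n × m) ℂ} (hL : L.PosSemidef) :
    (of fun p q => ∑ v, ∑ u, L (p, v) (q, u)).PosSemidef := by
  refine posSemidef_of_forall_dotProduct_mulVec_nonneg fun z => ?_
  convert hL.dotProduct_mulVec_nonneg (fun x => z x.1) using 1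
  simp only [dotProduct, mulVec, Fintype.sum_prod_type, of_apply, Pi.star_apply, Finset.mul_sum,
    Finset.sum_mul]
  exact Finset.sum_congr rfl fun _ _ => Finset.sum_comm

end Matrix

theorem neg_smul_add_smul_mul_eq_smul_one_add {A : Type*} [Ring A] [Algebra ℂ A]
    {H H0 Hplus Hminus : A} {lam : ℝ} (hH : H = Hminus + H0 + Hplus + (lam : ℂ) • 1)
    {s : ℝ} (hs : s ≠ 0) (β : ℝ) :
    (-β : ℂ) • H + ((s * β : ℝ) : ℂ) • (Hminus * Hplus)
      = ((-β * lam - β / s : ℝ) : ℂ) • 1 + ((β : ℂ) • -H0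
          + ((β / s : ℝ) : ℂ) • ((1 - (s : ℂ) • Hminus) * (1 - (s : ℂ) • Hplus))) := by
  have hs' : (s : ℂ) ≠ 0 := Complex.ofReal_ne_zero.mpr hs
  subst hH
  simp only [mul_sub, sub_mul, one_mul, mul_one, smul_mul_assoc, mul_smul_comm]
  push_cast
  match_scalars <;> field_simp
  ring

theorem NormedSpace.exp_ofReal_smul_one_add {A : Type*} [NormedRing A] [NormedAlgebra ℂ A]
    [CompleteSpace A] (c : ℝ) (Y : A) :
    NormedSpace.exp ((c : ℂ) • 1 + Y) = (Real.exp c : ℂ) • NormedSpace.exp Y := by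
  let +nondep : NormedAlgebra ℚ A := .restrictScalars ℚ ℂ A
  rw [NormedSpace.exp_add_of_commute ((Commute.one_left Y).smul_left _),
    ← Algebra.algebraMap_eq_smul_one, ← NormedSpace.algebraMap_exp_comm, ← Complex.exp_eq_exp_ℂ,
    ← Complex.ofReal_exp, Algebra.algebraMap_eq_smul_one, smul_one_mul]

section StringFourierMatrix

open Matrix

variable {ι E : Type*} [Fintype ι] [NormedAddCommGroup E] [InnerProductSpace ℂ E]
  (b : OrthonormalBasis (ι × ι) ℂ E)

/-- For `b (i, j) = θ e_i ⊗ e_j` this is the matrix of `𝔉ₛ(T)` in the basis `e_a ⊗ θ e_b`. -/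
noncomputable def stringFourierMatrix : (E →L[ℂ] E) →ₗ[ℂ] Matrix (ι × ι) (ι × ι) ℂ where
  toFun T := of fun p q => ⟪b (q.1, p.1), T (b (q.2, p.2))⟫
  map_add' T T' := by ext; simp
  map_smul' c T := by ext; simp

@[simp]
theorem stringFourierMatrix_apply (T : E →L[ℂ] E) (p q : ι × ι) :
    stringFourierMatrix b T p q = ⟪b (q.1, p.1), T (b (q.2, p.2))⟫ := rfl

theorem stringFourierMatrix_mul (T T' : E →L[ℂ] E) :
    stringFourierMatrix b (T * T') = of fun p q => ∑ v, ∑ u,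
      (stringFourierMatrix b T ⊗ₖ stringFourierMatrix b T')
        ((p.1, v), (v, p.2)) ((q.1, u), (u, q.2)) := by
  ext p q
  rw [stringFourierMatrix_apply, mul_apply_eq_comp, ← b.sum_repr' (T' _)]
  simp only [map_sum, map_smul, inner_sum, inner_smul_right, Fintype.sum_prod_type, of_apply,
    kroneckerMap_apply, stringFourierMatrix_apply]
  rw [Finset.sum_comm]
  exact Finset.sum_congr rfl fun _ _ => Finset.sum_congr rfl fun _ _ => mul_comm _ _

theorem posSemidef_stringFourierMatrix_mul {T T' : E →L[ℂ] E}
    (hT : (stringFourierMatrix b T).PosSemidef) (hT' : (stringFourierMatrix b T').PosSemidef) :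
    (stringFourierMatrix b (T * T')).PosSemidef := by
  rw [stringFourierMatrix_mul]
  exact ((hT.kronecker hT').submatrix
    fun x : (ι × ι) × ι => ((x.1.1, x.2), (x.2, x.1.2))).sum_blocks

theorem posSemidef_stringFourierMatrix_one : (stringFourierMatrix b 1).PosSemidef := by
  classical
  convert posSemidef_vecMulVec_self_star fun p : ι × ι => if p.1 = p.2 then (1 : ℂ) else 0
  ext p q
  simp [vecMulVec_apply, orthonormal_iff_ite.mp b.orthonormal, ite_and]

theorem posSemidef_stringFourierMatrix_exp {X : E →L[ℂ] E}
    (hX : (stringFourierMatrix b X).PosSemidef) :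
    (stringFourierMatrix b (NormedSpace.exp X)).PosSemidef := by
  have : FiniteDimensional ℂ E := b.toBasis.finiteDimensional_of_finite
  have hpow (n : ℕ) : (stringFourierMatrix b (X ^ n)).PosSemidef := by
    induction n with
    | zero => exact posSemidef_stringFourierMatrix_one b
    | succ n ih => exact pow_succ X n ▸ posSemidef_stringFourierMatrix_mul b ih hX
  refine .of_hasSum ((NormedSpace.exp_series_hasSum_exp' (𝕂 := ℂ) X).mapL
    (stringFourierMatrix b).toContinuousLinearMap) fun n => ?_
  simp only [LinearMap.coe_toContinuousLinearMap', map_smul]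
  exact (hpow n).smul (by positivity)

theorem inner_sum_smul_apply_sum_smul (T : E →L[ℂ] E) (u v : ι → ℂ) :
    ⟪∑ r, (starRingEnd ℂ (v r.1) * v r.2) • b r,
        T (∑ r, (starRingEnd ℂ (u r.1) * u r.2) • b r)⟫
      = star (fun q : ι × ι => v q.1 * starRingEnd ℂ (u q.2)) ⬝ᵥ
          stringFourierMatrix b T *ᵥ fun q => v q.1 * starRingEnd ℂ (u q.2) := by
  -- `(r', r) ↦ (p, q)` with `r = (q.1, p.1)` and `r' = (q.2, p.2)`
  let σ : (ι × ι) × (ι × ι) ≃ (ι × ι) × (ι × ι) :=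
    { toFun x := ((x.2.2, x.1.2), (x.2.1, x.1.1))
      invFun y := ((y.2.2, y.1.2), (y.2.1, y.1.1))
      left_inv _ := rfl
      right_inv _ := rfl }
  simp only [map_sum, map_smul, sum_inner, inner_sum, inner_smul_left, inner_smul_right,
    dotProduct, mulVec, Finset.mul_sum, ← Fintype.sum_prod_type']
  refine Fintype.sum_equiv σ _ _ fun x => ?_
  simp only [σ, Equiv.coe_fn_mk, map_mul, RingHomCompTriple.comp_apply, RingHom.id_apply,
    Pi.star_apply, star_mul', RCLike.star_def, stringFourierMatrix_apply, Prod.mk.eta]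
  ring

end StringFourierMatrix

section Reflection

open Matrix

variable {ι Hp Hm Hmp : Type*} [Fintype ι]
  [NormedAddCommGroup Hp] [InnerProductSpace ℂ Hp]
  [NormedAddCommGroup Hm] [InnerProductSpace ℂ Hm]
  [NormedAddCommGroup Hmp] [InnerProductSpace ℂ Hmp]
  (θ : Hp ≃ₗ⋆[ℂ] Hm) (tmp : Hm →ₗ[ℂ] Hp →ₗ[ℂ] Hmp) (e : OrthonormalBasis ι ℂ Hp)

theorem tmp_theta_eq_sum (x y : Hp) :
    tmp (θ x) y
      = ∑ r : ι × ι, (starRingEnd ℂ ⟪e r.1, x⟫ * ⟪e r.2, y⟫) • tmp (θ (e r.1)) (e r.2) := by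
  conv_lhs => rw [← e.sum_repr' x, ← e.sum_repr' y]
  simp only [map_sum, map_smulₛₗ, LinearMap.coe_sum, Finset.sum_apply, LinearMap.smul_apply,
    Finset.smul_sum, smul_smul, Fintype.sum_prod_type, RingHom.id_apply]
  rw [Finset.sum_comm]
  simp only [mul_comm]

variable {θ tmp}

theorem orthonormal_tmp_theta (hθ : ∀ x x' : Hp, ⟪x, x'⟫ = ⟪θ x', θ x⟫)
    (htmp : ∀ (y : Hm) (x : Hp) (y' : Hm) (x' : Hp),
      ⟪tmp y x, tmp y' x'⟫ = ⟪y, y'⟫ * ⟪x, x'⟫) :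
    Orthonormal ℂ fun r : ι × ι => tmp (θ (e r.1)) (e r.2) := by
  classical
  rw [orthonormal_iff_ite]
  intro p q
  rw [htmp, ← hθ, orthonormal_iff_ite.mp e.orthonormal, orthonormal_iff_ite.mp e.orthonormal]
  by_cases h₁ : p.1 = q.1 <;> by_cases h₂ : p.2 = q.2 <;> simp [h₁, h₂, Prod.ext_iff, eq_comm]

variable (hθ : ∀ x x' : Hp, ⟪x, x'⟫ = ⟪θ x', θ x⟫)
  (htmp : ∀ (y : Hm) (x : Hp) (y' : Hm) (x' : Hp),
    ⟪tmp y x, tmp y' x'⟫ = ⟪y, y'⟫ * ⟪x, x'⟫)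
  (hspan : ⊤ ≤ Submodule.span ℂ (Set.range fun p : Hm × Hp => tmp p.1 p.2))

noncomputable def reflectionBasis : OrthonormalBasis (ι × ι) ℂ Hmp :=
  OrthonormalBasis.mk (orthonormal_tmp_theta e hθ htmp) <|
    hspan.trans <| Submodule.span_le.mpr <| by
      rintro _ ⟨⟨y, x⟩, rfl⟩
      dsimp only
      rw [← θ.apply_symm_apply y, tmp_theta_eq_sum θ tmp e]
      exact Submodule.sum_mem _ fun r _ => Submodule.smul_mem _ _ (Submodule.subset_span ⟨r, rfl⟩)

theorem reflectionBasis_apply (r : ι × ι) :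
    reflectionBasis e hθ htmp hspan r = tmp (θ (e r.1)) (e r.2) := by
  simp [reflectionBasis]

theorem inner_tmp_theta_self_apply (T : Hmp →L[ℂ] Hmp) (x x' : Hp) :
    ⟪tmp (θ x') x', T (tmp (θ x) x)⟫
      = star (fun q : ι × ι => ⟪e q.1, x'⟫ * starRingEnd ℂ ⟪e q.2, x⟫) ⬝ᵥ
          stringFourierMatrix (reflectionBasis e hθ htmp hspan) T *ᵥ
            fun q => ⟪e q.1, x'⟫ * starRingEnd ℂ ⟪e q.2, x⟫ := by
  rw [tmp_theta_eq_sum θ tmp e x', tmp_theta_eq_sum θ tmp e x]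
  simp only [← reflectionBasis_apply e hθ htmp hspan]
  exact inner_sum_smul_apply_sum_smul _ T (fun i => ⟪e i, x⟫) (fun i => ⟪e i, x'⟫)

theorem posSemidef_stringFourierMatrix_of_apply_tmp_theta (A : Hp →ₗ[ℂ] Hp)
    {T : Hmp →L[ℂ] Hmp} (hT : ∀ x y, T (tmp (θ x) y) = tmp (θ (A x)) (A y)) :
    (stringFourierMatrix (reflectionBasis e hθ htmp hspan) T).PosSemidef := by
  convert posSemidef_vecMulVec_self_star fun p : ι × ι => ⟪e p.1, A (e p.2)⟫
  ext p q
  simp [vecMulVec_apply, reflectionBasis_apply, hT, htmp, ← hθ, mul_comm]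

theorem posSemidef_stringFourierMatrix_of_inner_nonneg {Hpm : Type*} [NormedAddCommGroup Hpm]
    [InnerProductSpace ℂ Hpm] (tpm : Hp →ₗ[ℂ] Hm →ₗ[ℂ] Hpm) {T : Hmp →L[ℂ] Hmp}
    {F : Hpm →L[ℂ] Hpm} (hF : ∀ (x x' : Hp) (y y' : Hm),
      ⟪tpm x y, F (tpm x' y')⟫ = ⟪tmp (θ x') x, T (tmp y' (θ.symm y))⟫)
    (hpos : ∀ w, 0 ≤ ⟪w, F w⟫) :
    (stringFourierMatrix (reflectionBasis e hθ htmp hspan) T).PosSemidef := by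
  refine posSemidef_of_forall_dotProduct_mulVec_nonneg fun z => ?_
  convert hpos (∑ p : ι × ι, z p • tpm (e p.1) (θ (e p.2))) using 1
  simp only [map_sum, map_smul, sum_inner, inner_sum, inner_smul_left, inner_smul_right, hF,
    dotProduct, mulVec, Finset.mul_sum, stringFourierMatrix_apply, reflectionBasis_apply,
    LinearEquiv.symm_apply_apply, Pi.star_apply]
  rw [Finset.sum_comm]
  exact Finset.sum_congr rfl fun _ _ => Finset.sum_congr rfl fun _ _ => by
    rw [Complex.star_def]
    ring

theorem one_sub_smul_mul_one_sub_smul_apply_tmp_theta {Θ : Hmp →ₛₗ[starRingEnd ℂ] Hmp}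
    (hΘ : ∀ (y : Hm) (x : Hp), Θ (tmp y x) = tmp (θ x) (θ.symm y))
    {Hplus Hminus : Hmp →L[ℂ] Hmp} {H'p : Hp →L[ℂ] Hp}
    (hHplus : ∀ (y : Hm) (x : Hp), Hplus (tmp y x) = tmp y (H'p x))
    (hHminus : ∀ v : Hmp, Hminus v = Θ (Hplus (Θ v))) (s : ℝ) (x y : Hp) :
    ((1 - (s : ℂ) • Hminus) * (1 - (s : ℂ) • Hplus)) (tmp (θ x) y)
      = tmp (θ ((1 - (s : ℂ) • H'p) x)) ((1 - (s : ℂ) • H'p) y) := by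
  have hHminus_apply (x y : Hp) : Hminus (tmp (θ x) y) = tmp (θ (H'p x)) y := by
    rw [hHminus, hΘ, hHplus, hΘ, θ.symm_apply_apply, θ.symm_apply_apply]
  simp only [mul_apply_eq_comp, _root_.sub_apply, one_apply_eq_self, _root_.smul_apply, hHplus,
    hHminus_apply, map_sub, map_smul, map_smulₛₗ, Complex.conj_ofReal, LinearMap.sub_apply,
    LinearMap.smul_apply]

end Reflection

theorem second_RP_theorem_intermediate_general
{Hp Hm Hmp Hpm : Type}
    [NormedAddCommGroup Hp] [InnerProductSpace ℂ Hp] [FiniteDimensional ℂ Hp]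
    [NormedAddCommGroup Hm] [InnerProductSpace ℂ Hm]
    [NormedAddCommGroup Hmp] [InnerProductSpace ℂ Hmp] [FiniteDimensional ℂ Hmp]
    [NormedAddCommGroup Hpm] [InnerProductSpace ℂ Hpm]
(θ : Hp ≃ₗ⋆[ℂ] Hm)
    (hθ : ∀ x x' : Hp, ⟪x, x'⟫ = ⟪θ x', θ x⟫)
(tmp : Hm →ₗ[ℂ] Hp →ₗ[ℂ] Hmp) (tpm : Hp →ₗ[ℂ] Hm →ₗ[ℂ] Hpm)
    (htmp : ∀ (y : Hm) (x : Hp) (y' : Hm) (x' : Hp),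
      ⟪tmp y x, tmp y' x'⟫ = ⟪y, y'⟫ * ⟪x, x'⟫)
    (hmp_span : ⊤ ≤ Submodule.span ℂ (Set.range fun p : Hm × Hp => tmp p.1 p.2))
(Fs : (Hmp →L[ℂ] Hmp) → (Hpm →L[ℂ] Hpm))
    (hFs : ∀ (T : Hmp →L[ℂ] Hmp) (x x' : Hp) (y y' : Hm),
      ⟪tpm x y, Fs T (tpm x' y')⟫ = ⟪tmp (θ x') x, T (tmp y' (θ.symm y))⟫)
(Θ : Hmp →ₛₗ[starRingEnd ℂ] Hmp)
    (hΘ : ∀ (y : Hm) (x : Hp), Θ (tmp y x) = tmp (θ x) (θ.symm y))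
    (H H0 Hplus Hminus : Hmp →L[ℂ] Hmp) (lam : ℝ) (H'p : Hp →L[ℂ] Hp)
    (hHplus : ∀ (y : Hm) (x : Hp), Hplus (tmp y x) = tmp y (H'p x))
    (hHminus : ∀ v : Hmp, Hminus v = Θ (Hplus (Θ v)))
    (hdecomp : H = Hminus + H0 + Hplus + (lam : ℂ) • 1)
    (hpos : ∀ w : Hpm, 0 ≤ ⟪w, Fs (-H0) w⟫) :
    ∀ s : ℝ, 0 < s → ∀ (x x' : Hp) (β : ℝ), 0 ≤ β →
      0 ≤ ⟪tmp (θ x') x',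
        NormedSpace.exp ((-β : ℂ) • H + ((s * β : ℝ) : ℂ) • (Hminus ∘L Hplus))
          (tmp (θ x) x)⟫ := by
  intro s hs x x' β hβ
  let e := stdOrthonormalBasis ℂ Hp
  have hH0 :=
    posSemidef_stringFourierMatrix_of_inner_nonneg e hθ htmp hmp_span tpm (hFs (-H0)) hpos
  have hA := posSemidef_stringFourierMatrix_of_apply_tmp_theta e hθ htmp hmp_span
    (1 - (s : ℂ) • H'p : Hp →L[ℂ] Hp)
    (one_sub_smul_mul_one_sub_smul_apply_tmp_theta hΘ hHplus hHminus s)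
  rw [inner_tmp_theta_self_apply e hθ htmp hmp_span, ← ContinuousLinearMap.mul_def,
    neg_smul_add_smul_mul_eq_smul_one_add hdecomp hs.ne', NormedSpace.exp_ofReal_smul_one_add,
    map_smul]
  refine (Matrix.PosSemidef.smul (posSemidef_stringFourierMatrix_exp _ ?_) ?_
    ).dotProduct_mulVec_nonneg _
  · rw [map_add, map_smul, map_smul]
    exact (hH0.smul (Complex.zero_le_real.mpr hβ)).add
      (hA.smul (Complex.zero_le_real.mpr (div_nonneg hβ hs.le)))
  · exact Complex.zero_le_real.mpr (Real.exp_pos _).le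

/-- **Intermediate step in the second RP theorem.** With `H = H₋ + H₀ + H₊ + λI`,
`H₊ = I₋ ⊗ H'₊`, `H₋ = θ(H₊)`, and `𝔉ₛ(-H₀) ≥ 0`: for every `s > 0` the operator
`H - s·θ(H₊)H₊` has the RP property. -/
theorem second_RP_theorem_intermediate
{Hp Hm Hmp Hpm : Type}
    [NormedAddCommGroup Hp] [InnerProductSpace ℂ Hp] [FiniteDimensional ℂ Hp]
    [NormedAddCommGroup Hm] [InnerProductSpace ℂ Hm] [FiniteDimensional ℂ Hm]
    [NormedAddCommGroup Hmp] [InnerProductSpace ℂ Hmp] [FiniteDimensional ℂ Hmp]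
    [NormedAddCommGroup Hpm] [InnerProductSpace ℂ Hpm] [FiniteDimensional ℂ Hpm]
(θ : Hp ≃ₗ⋆[ℂ] Hm)
    (hθ : ∀ x x' : Hp, ⟪x, x'⟫ = ⟪θ x', θ x⟫)
(tmp : Hm →ₗ[ℂ] Hp →ₗ[ℂ] Hmp) (tpm : Hp →ₗ[ℂ] Hm →ₗ[ℂ] Hpm)
    (htmp : ∀ (y : Hm) (x : Hp) (y' : Hm) (x' : Hp),
      ⟪tmp y x, tmp y' x'⟫ = ⟪y, y'⟫ * ⟪x, x'⟫)
    (htpm : ∀ (x : Hp) (y : Hm) (x' : Hp) (y' : Hm),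
      ⟪tpm x y, tpm x' y'⟫ = ⟪x, x'⟫ * ⟪y, y'⟫)
    (hmp_span : ⊤ ≤ Submodule.span ℂ (Set.range fun p : Hm × Hp => tmp p.1 p.2))
    (hpm_span : ⊤ ≤ Submodule.span ℂ (Set.range fun p : Hp × Hm => tpm p.1 p.2))
(Fs : (Hmp →L[ℂ] Hmp) → (Hpm →L[ℂ] Hpm))
    (hFs : ∀ (T : Hmp →L[ℂ] Hmp) (x x' : Hp) (y y' : Hm),
      ⟪tpm x y, Fs T (tpm x' y')⟫ = ⟪tmp (θ x') x, T (tmp y' (θ.symm y))⟫)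
(Θ : Hmp →ₛₗ[starRingEnd ℂ] Hmp)
    (hΘ : ∀ (y : Hm) (x : Hp), Θ (tmp y x) = tmp (θ x) (θ.symm y))
    (H H0 Hplus Hminus : Hmp →L[ℂ] Hmp) (lam : ℝ) (H'p : Hp →L[ℂ] Hp)
    (hHplus : ∀ (y : Hm) (x : Hp), Hplus (tmp y x) = tmp y (H'p x))
    (hHminus : ∀ v : Hmp, Hminus v = Θ (Hplus (Θ v)))
    (hdecomp : H = Hminus + H0 + Hplus + (lam : ℂ) • 1)
    (hpos : ∀ w : Hpm, 0 ≤ ⟪w, Fs (-H0) w⟫) :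
    ∀ s : ℝ, 0 < s → ∀ (x x' : Hp) (β : ℝ), 0 ≤ β →
      0 ≤ ⟪tmp (θ x') x',
        NormedSpace.exp ((-β : ℂ) • H + ((s * β : ℝ) : ℂ) • (Hminus ∘L Hplus))
          (tmp (θ x) x)⟫ :=
  second_RP_theorem_intermediate_general θ hθ tmp tpm htmp hmp_span Fs hFs Θ hΘ H H0 Hplus Hminus
    lam H'p hHplus hHminus hdecomp hpos
end
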